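/- Cumulative lower bound for Gradient Bandit: For any parameter θ ∈ [0,∞), any sequences of rewards in [0,1] and actions in [K], the Gradient Bandit probabilities satisfy π_{t+1}^θ(k) ≥ π_t^θ(k) · e^{−2θ/√n} for every t ≥ 1 and every k ∈ [K], and consequently π_{t+1}^θ(k) ≥ (1/K) · e^{−2(θ/√n) t} for every k ∈ [K]. -/
import Mathlib


/-- Softmax distribution associated with a score vector. -/
noncomputable def softmax {ι : Type*} [Fintype ι] (h : ι → ℝ) (a : ι) : ℝ :=
  Real.exp (h a) / ∑ b, Real.exp (h b)

/-- Cumulative estimated rewards `G t b = Σ_{s=1}^t ĝ_{b,s}` of the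
`Gradient Bandit` algorithm with learning rate `θ/√n`, where
`ĝ_{b,s} = (1{A_s = b} − π_s(b)) g_{A_s,s}`. -/
noncomputable def gradBanditG (n K : ℕ) (g : Fin K → ℕ → ℝ) (A : ℕ → Fin K)
    (θ : ℝ) : ℕ → Fin K → ℝ
  | 0 => fun _ => 0
  | (t + 1) => fun b =>
      gradBanditG n K g A θ t b +
        ((if A (t + 1) = b then 1 else 0) -
            softmax (fun c => -(θ / Real.sqrt n) * gradBanditG n K g A θ t c) b) *
          g (A (t + 1)) (t + 1)

/-- The `Gradient Bandit` action probabilities: `π_1` is uniform and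
`π_{t+1} = softmax(−(θ/√n) Σ_{s≤t} ĝ_{·,s})`. -/
noncomputable def gradBanditPi (n K : ℕ) (g : Fin K → ℕ → ℝ) (A : ℕ → Fin K)
    (θ : ℝ) (t : ℕ) : Fin K → ℝ :=
  softmax (fun c => -(θ / Real.sqrt n) * gradBanditG n K g A θ (t - 1) c)

lemma sum_exp_pos {ι : Type*} [Fintype ι] [Nonempty ι] (h : ι → ℝ) :
    0 < ∑ b, Real.exp (h b) :=
  Finset.sum_pos (fun b _ => Real.exp_pos _) Finset.univ_nonempty

lemma softmax_nonneg {ι : Type*} [Fintype ι] [Nonempty ι] (h : ι → ℝ) (a : ι) :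
    0 ≤ softmax h a :=
  div_nonneg (Real.exp_pos _).le (sum_exp_pos h).le

lemma softmax_le_one {ι : Type*} [Fintype ι] [Nonempty ι] (h : ι → ℝ) (a : ι) :
    softmax h a ≤ 1 := by
  unfold softmax
  rw [div_le_one (sum_exp_pos h)]
  exact Finset.single_le_sum (fun b _ => (Real.exp_pos _).le) (Finset.mem_univ a)

lemma softmax_shift {ι : Type*} [Fintype ι] [Nonempty ι] (h h' : ι → ℝ) (d : ℝ)
    (hd : ∀ c, |h' c - h c| ≤ d) (a : ι) :
    softmax h a * Real.exp (-2 * d) ≤ softmax h' a := by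
  unfold softmax
  rw [div_mul_eq_mul_div, div_le_div_iff₀ (sum_exp_pos h) (sum_exp_pos h')]
  have hS : ∑ b, Real.exp (h' b) ≤ Real.exp d * ∑ b, Real.exp (h b) := by
    rw [Finset.mul_sum]
    apply Finset.sum_le_sum
    intro b _
    rw [← Real.exp_add]
    apply Real.exp_le_exp.2
    have := (abs_le.1 (hd b)).2; linarith
  have ha : Real.exp (h a + -d) ≤ Real.exp (h' a) := by
    apply Real.exp_le_exp.2
    have := (abs_le.1 (hd a)).1; linarith
  calc Real.exp (h a) * Real.exp (-2 * d) * ∑ b, Real.exp (h' b)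
      ≤ Real.exp (h a) * Real.exp (-2 * d) * (Real.exp d * ∑ b, Real.exp (h b)) := by
        apply mul_le_mul_of_nonneg_left hS; positivity
    _ = Real.exp (h a + -d) * ∑ b, Real.exp (h b) := by
        rw [← Real.exp_add, ← mul_assoc, ← Real.exp_add]; ring_nf
    _ ≤ Real.exp (h' a) * ∑ b, Real.exp (h b) :=
        mul_le_mul_of_nonneg_right ha (sum_exp_pos h).le

/-- cumulative lower bound for `Gradient Bandit`. For any `θ ≥ 0`,
rewards in `[0,1]` and actions in `[K]`: `π_{t+1}(k) ≥ π_t(k) e^{−2θ/√n}` for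
every `t ≥ 1` and `k`, and consequently `π_{t+1}(k) ≥ (1/K) e^{−2(θ/√n) t}`. -/
theorem gradBandit_cumulative_lower_bound (n K : ℕ) (hn : 1 ≤ n) (hK : 2 ≤ K)
    (g : Fin K → ℕ → ℝ) (hg : ∀ a t, g a t ∈ Set.Icc (0 : ℝ) 1)
    (A : ℕ → Fin K) (θ : ℝ) (hθ : 0 ≤ θ) :
    (∀ t : ℕ, 1 ≤ t → ∀ k,
      gradBanditPi n K g A θ t k * Real.exp (-2 * θ / Real.sqrt n) ≤
        gradBanditPi n K g A θ (t + 1) k) ∧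
    (∀ t : ℕ, ∀ k,
      (1 / (K : ℝ)) * Real.exp (-2 * (θ / Real.sqrt n) * (t : ℝ)) ≤
        gradBanditPi n K g A θ (t + 1) k) := by
  haveI : Nonempty (Fin K) := ⟨⟨0, by omega⟩⟩
  set η : ℝ := θ / Real.sqrt n with hη_def
  have hη : 0 ≤ η := div_nonneg hθ (Real.sqrt_nonneg _)
  have hexp : -2 * θ / Real.sqrt n = -2 * η := by rw [hη_def]; ring
  -- step inequality for all t (π_{t+1} vs π_{t+2})
  have step : ∀ t : ℕ, ∀ k,
      gradBanditPi n K g A θ (t + 1) k * Real.exp (-2 * η) ≤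
        gradBanditPi n K g A θ (t + 2) k := by
    intro t k
    have h1 : gradBanditPi n K g A θ (t + 1) =
        softmax (fun c => -η * gradBanditG n K g A θ t c) := rfl
    have h2 : gradBanditPi n K g A θ (t + 2) =
        softmax (fun c => -η * gradBanditG n K g A θ (t + 1) c) := rfl
    rw [h1, h2]
    apply softmax_shift
    intro c
    have hGdiff : gradBanditG n K g A θ (t + 1) c - gradBanditG n K g A θ t c =
        ((if A (t + 1) = c then 1 else 0) -
            softmax (fun b => -(θ / Real.sqrt n) * gradBanditG n K g A θ t b) c) *
          g (A (t + 1)) (t + 1) := by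
      simp [gradBanditG]
    have hπ0 : (0:ℝ) ≤ softmax (fun b => -(θ / Real.sqrt n) * gradBanditG n K g A θ t b) c :=
      softmax_nonneg _ c
    have hπ1 : softmax (fun b => -(θ / Real.sqrt n) * gradBanditG n K g A θ t b) c ≤ 1 :=
      softmax_le_one _ c
    have hg0 := (hg (A (t+1)) (t+1)).1
    have hg1 := (hg (A (t+1)) (t+1)).2
    have habs : |gradBanditG n K g A θ (t + 1) c - gradBanditG n K g A θ t c| ≤ 1 := by
      rw [hGdiff, abs_mul]
      have h1' : |(if A (t + 1) = c then (1:ℝ) else 0) -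
          softmax (fun b => -(θ / Real.sqrt n) * gradBanditG n K g A θ t b) c| ≤ 1 := by
        rw [abs_le]; split_ifs <;> constructor <;> linarith
      have h2' : |g (A (t + 1)) (t + 1)| ≤ 1 := by rw [abs_le]; constructor <;> linarith
      calc _ ≤ 1 * 1 := mul_le_mul h1' h2' (abs_nonneg _) zero_le_one
        _ = 1 := one_mul 1
    calc |(-η) * gradBanditG n K g A θ (t + 1) c - (-η) * gradBanditG n K g A θ t c|
        = η * |gradBanditG n K g A θ (t + 1) c - gradBanditG n K g A θ t c| := by
          rw [← mul_sub, abs_mul, abs_neg, abs_of_nonneg hη]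
      _ ≤ η * 1 := mul_le_mul_of_nonneg_left habs hη
      _ = η := mul_one η
  have hπ1 : ∀ k, gradBanditPi n K g A θ 1 k = 1 / (K : ℝ) := by
    intro k
    have : gradBanditPi n K g A θ 1 =
        softmax (fun c => -η * gradBanditG n K g A θ 0 c) := rfl
    rw [this]
    simp [softmax, gradBanditG, Finset.card_univ]
  constructor
  · intro t ht k
    obtain ⟨s, rfl⟩ := Nat.exists_eq_add_of_le ht
    rw [hexp]
    rw [add_comm 1 s]
    exact step s k
  · intro t
    induction t with
    | zero =>
      intro k
      have h0 := hπ1 k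
      simp [h0]
    | succ t ih =>
      intro k
      have h1 := ih k
      have h2 := step t k
      have hcast : ((t + 1 : ℕ) : ℝ) = (t : ℝ) + 1 := by push_cast; ring
      have key : (1 / (K : ℝ)) * Real.exp (-2 * η * ((t:ℝ) + 1)) =
          (1 / (K : ℝ)) * Real.exp (-2 * η * (t:ℝ)) * Real.exp (-2 * η) := by
        rw [mul_assoc (1/(K:ℝ)), ← Real.exp_add]; ring_nf
      rw [hcast, key]
      have hK0 : (0:ℝ) ≤ Real.exp (-2 * η) := (Real.exp_pos _).le
      calc (1 / (K : ℝ)) * Real.exp (-2 * η * (t:ℝ)) * Real.exp (-2 * η)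
          ≤ gradBanditPi n K g A θ (t + 1) k * Real.exp (-2 * η) :=
            mul_le_mul_of_nonneg_right h1 hK0
        _ ≤ gradBanditPi n K g A θ (t + 2) k := h2
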